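/- arXiv:1101.3638 — 2 statements merged into one kernel-verified Lean document; each statement's English description precedes it below -/
import Mathlib

section
/- Let (φ_i)_{i∈I} and (ψ_j)_{j∈J} be two Parseval (tight with frame bound 1) frames for a Hilbert space H, and let 0 < p ≤ 1. If ‖(⟨φ_i, ψ_j⟩)_{i,j}‖_{Op,p} < ∞, then for every f ∈ H, ∑_i |⟨f, φ_i⟩|^p < ∞ if and only if ∑_j |⟨f, ψ_j⟩|^p < ∞. In other words, the two frames are sparsity equivalent in ℓ_p with respect to any subset of H. -/
/-!
Expanding `f` in the Parseval frame `φ` gives `⟪ψ j, f⟫ = ∑ i ⟪f, φ i⟫ ⟪ψ j, φ i⟫`. Since `0 < p ≤ 1`,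
`t ↦ t ^ p` is subadditive, so `|⟪f, ψ j⟫| ^ p ≤ ∑ i |⟪f, φ i⟫| ^ p |⟪φ i, ψ j⟫| ^ p`; summing over `j`
and exchanging the sums bounds `∑ j |⟪f, ψ j⟫| ^ p` by `B ^ p ∑ i |⟪f, φ i⟫| ^ p`. The column bound
gives the converse by symmetry. All sums are taken in `ℝ≥0∞`, where they always exist and commute.
-/

open scoped InnerProductSpace ENNReal

namespace ENNReal

theorem rpow_sum_le_sum_rpow {ι : Type*} (g : ι → ℝ≥0∞) {p : ℝ} (hp0 : 0 < p) (hp1 : p ≤ 1)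
    (s : Finset ι) : (∑ i ∈ s, g i) ^ p ≤ ∑ i ∈ s, g i ^ p := by
  classical
  induction s using Finset.cons_induction with
  | empty => simp [ENNReal.zero_rpow_of_pos hp0]
  | cons a s ha ih =>
    rw [Finset.sum_cons, Finset.sum_cons]
    exact (rpow_add_le_add_rpow _ _ hp0.le hp1).trans (by gcongr)

theorem rpow_tsum_le_tsum_rpow {ι : Type*} (g : ι → ℝ≥0∞) {p : ℝ} (hp0 : 0 < p) (hp1 : p ≤ 1) :
    (∑' i, g i) ^ p ≤ ∑' i, g i ^ p := by
  have hpow : (⨆ s : Finset ι, ∑ i ∈ s, g i) ^ p = ⨆ s : Finset ι, (∑ i ∈ s, g i) ^ p :=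
    (orderIsoRpow p hp0).map_iSup _
  rw [ENNReal.tsum_eq_iSup_sum, hpow]
  exact iSup_le fun s => (rpow_sum_le_sum_rpow g hp0 hp1 s).trans (ENNReal.sum_le_tsum s)

end ENNReal

section NormRpow

variable {ι E : Type*} [NormedAddCommGroup E] {x : ι → E} {p : ℝ}

theorem enorm_rpow_eq_ofReal (y : E) (hp : 0 ≤ p) : ‖y‖ₑ ^ p = ENNReal.ofReal (‖y‖ ^ p) := by
  rw [← ofReal_norm, ENNReal.ofReal_rpow_of_nonneg (norm_nonneg _) hp]

theorem tsum_enorm_rpow_eq_ofReal (hp : 0 ≤ p) (hx : Summable fun i => ‖x i‖ ^ p) :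
    ∑' i, ‖x i‖ₑ ^ p = ENNReal.ofReal (∑' i, ‖x i‖ ^ p) := by
  simp_rw [enorm_rpow_eq_ofReal _ hp]
  exact (ENNReal.ofReal_tsum_of_nonneg (fun i => by positivity) hx).symm

theorem summable_norm_rpow_iff_tsum_enorm_rpow_ne_top (hp : 0 ≤ p) :
    (Summable fun i => ‖x i‖ ^ p) ↔ ∑' i, ‖x i‖ₑ ^ p ≠ ∞ := by
  refine ⟨fun hx => tsum_enorm_rpow_eq_ofReal hp hx ▸ ENNReal.ofReal_ne_top, fun hx => ?_⟩
  simp_rw [enorm_rpow_eq_ofReal _ hp] at hx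
  simpa [ENNReal.toReal_ofReal (Real.rpow_nonneg (norm_nonneg _) p)] using
    ENNReal.summable_toReal hx

end NormRpow

section FrameCoefficients

variable {𝕜 H I J : Type*} [RCLike 𝕜] [NormedAddCommGroup H] [InnerProductSpace 𝕜 H]
  {p : ℝ} {φ : I → H} {f : H}

theorem enorm_inner_symm (x y : H) : ‖⟪x, y⟫_𝕜‖ₑ = ‖⟪y, x⟫_𝕜‖ₑ := by
  rw [← ofReal_norm, norm_inner_symm, ofReal_norm]

theorem enorm_inner_rpow_le_tsum (hp0 : 0 < p) (hp1 : p ≤ 1)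
    (hf : HasSum (fun i => ⟪f, φ i⟫_𝕜 • φ i) f) (g : H) :
    ‖⟪f, g⟫_𝕜‖ₑ ^ p ≤ ∑' i, ‖⟪f, φ i⟫_𝕜‖ₑ ^ p * ‖⟪φ i, g⟫_𝕜‖ₑ ^ p := by
  have hexpand : HasSum (fun i => ⟪f, φ i⟫_𝕜 * ⟪g, φ i⟫_𝕜) ⟪g, f⟫_𝕜 := by
    simpa [inner_smul_right] using (innerSL 𝕜 g).hasSum hf
  calc ‖⟪f, g⟫_𝕜‖ₑ ^ p = ‖⟪g, f⟫_𝕜‖ₑ ^ p := by rw [enorm_inner_symm]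
    _ ≤ (∑' i, ‖⟪f, φ i⟫_𝕜 * ⟪g, φ i⟫_𝕜‖ₑ) ^ p := by
      gcongr
      exact hexpand.tsum_eq ▸ enorm_tsum_le_tsum_enorm
    _ ≤ ∑' i, ‖⟪f, φ i⟫_𝕜 * ⟪g, φ i⟫_𝕜‖ₑ ^ p := ENNReal.rpow_tsum_le_tsum_rpow _ hp0 hp1
    _ = ∑' i, ‖⟪f, φ i⟫_𝕜‖ₑ ^ p * ‖⟪φ i, g⟫_𝕜‖ₑ ^ p := tsum_congr fun i => by
      rw [enorm_mul, ENNReal.mul_rpow_of_nonneg _ _ hp0.le, enorm_inner_symm g]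

theorem tsum_enorm_inner_rpow_le (hp0 : 0 < p) (hp1 : p ≤ 1)
    (hf : HasSum (fun i => ⟪f, φ i⟫_𝕜 • φ i) f) (ψ : J → H) :
    ∑' j, ‖⟪f, ψ j⟫_𝕜‖ₑ ^ p ≤ ∑' i, ‖⟪f, φ i⟫_𝕜‖ₑ ^ p * ∑' j, ‖⟪φ i, ψ j⟫_𝕜‖ₑ ^ p :=
  calc ∑' j, ‖⟪f, ψ j⟫_𝕜‖ₑ ^ p
      ≤ ∑' j, ∑' i, ‖⟪f, φ i⟫_𝕜‖ₑ ^ p * ‖⟪φ i, ψ j⟫_𝕜‖ₑ ^ p :=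
        ENNReal.tsum_le_tsum fun j => enorm_inner_rpow_le_tsum hp0 hp1 hf (ψ j)
    _ = ∑' i, ‖⟪f, φ i⟫_𝕜‖ₑ ^ p * ∑' j, ‖⟪φ i, ψ j⟫_𝕜‖ₑ ^ p := by
      rw [ENNReal.tsum_comm]
      simp_rw [ENNReal.tsum_mul_left]

theorem summable_norm_inner_rpow_of_row_bound {C : ℝ} (hp0 : 0 < p) (hp1 : p ≤ 1)
    (hf : HasSum (fun i => ⟪f, φ i⟫_𝕜 • φ i) f) {ψ : J → H}
    (hrowSummable : ∀ i, Summable fun j => ‖⟪φ i, ψ j⟫_𝕜‖ ^ p)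
    (hrow : ∀ i, ∑' j, ‖⟪φ i, ψ j⟫_𝕜‖ ^ p ≤ C)
    (hφf : Summable fun i => ‖⟪f, φ i⟫_𝕜‖ ^ p) :
    Summable fun j => ‖⟪f, ψ j⟫_𝕜‖ ^ p := by
  have hrow' : ∀ i, ∑' j, ‖⟪φ i, ψ j⟫_𝕜‖ₑ ^ p ≤ ENNReal.ofReal C := fun i =>
    tsum_enorm_rpow_eq_ofReal hp0.le (hrowSummable i) ▸ ENNReal.ofReal_le_ofReal (hrow i)
  have hbound : ∑' j, ‖⟪f, ψ j⟫_𝕜‖ₑ ^ p ≤ (∑' i, ‖⟪f, φ i⟫_𝕜‖ₑ ^ p) * ENNReal.ofReal C :=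
    calc ∑' j, ‖⟪f, ψ j⟫_𝕜‖ₑ ^ p
        ≤ ∑' i, ‖⟪f, φ i⟫_𝕜‖ₑ ^ p * ∑' j, ‖⟪φ i, ψ j⟫_𝕜‖ₑ ^ p :=
          tsum_enorm_inner_rpow_le hp0 hp1 hf ψ
      _ ≤ ∑' i, ‖⟪f, φ i⟫_𝕜‖ₑ ^ p * ENNReal.ofReal C := by gcongr with i; exact hrow' i
      _ = (∑' i, ‖⟪f, φ i⟫_𝕜‖ₑ ^ p) * ENNReal.ofReal C := ENNReal.tsum_mul_right
  rw [summable_norm_rpow_iff_tsum_enorm_rpow_ne_top hp0.le] at hφf ⊢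
  exact ne_top_of_le_ne_top (ENNReal.mul_ne_top hφf ENNReal.ofReal_ne_top) hbound

end FrameCoefficients

theorem stmt4_general {H : Type*} [NormedAddCommGroup H] [InnerProductSpace ℂ H]
    {I J : Type*} (p B : ℝ) (hp0 : 0 < p) (hp1 : p ≤ 1)
    (φ : I → H) (ψ : J → H)
    (hφ : ∀ f : H, HasSum (fun i => ⟪f, φ i⟫_ℂ • φ i) f)
    (hψ : ∀ f : H, HasSum (fun j => ⟪f, ψ j⟫_ℂ • ψ j) f)
    (hrowSummable : ∀ i, Summable fun j => ‖⟪φ i, ψ j⟫_ℂ‖ ^ p)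
    (hcolSummable : ∀ j, Summable fun i => ‖⟪φ i, ψ j⟫_ℂ‖ ^ p)
    (hrow : ∀ i, ∑' j, ‖⟪φ i, ψ j⟫_ℂ‖ ^ p ≤ B ^ p)
    (hcol : ∀ j, ∑' i, ‖⟪φ i, ψ j⟫_ℂ‖ ^ p ≤ B ^ p) :
    ∀ f : H, (Summable fun i => ‖⟪f, φ i⟫_ℂ‖ ^ p) ↔ (Summable fun j => ‖⟪f, ψ j⟫_ℂ‖ ^ p) := by
  intro f
  have hsymm : ∀ j i, ‖⟪ψ j, φ i⟫_ℂ‖ = ‖⟪φ i, ψ j⟫_ℂ‖ := fun j i => norm_inner_symm _ _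
  refine ⟨summable_norm_inner_rpow_of_row_bound hp0 hp1 (hφ f) hrowSummable hrow,
    summable_norm_inner_rpow_of_row_bound (C := B ^ p) hp0 hp1 (hψ f) (fun j => ?_) (fun j => ?_)⟩
  · simpa only [hsymm] using hcolSummable j
  · simpa only [hsymm] using hcol j

/-- Two Parseval frames whose cross-Grammian matrix has finite `Op,p` norm are
sparsity equivalent in `ℓ_p`: for every `f ∈ H`, the `φ`-coefficient sequence lies in
`ℓ_p` iff the `ψ`-coefficient sequence does. -/
theorem stmt4 {H : Type*} [NormedAddCommGroup H] [InnerProductSpace ℂ H] [CompleteSpace H]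
    {I J : Type*} [Countable I] [Countable J] (p B : ℝ) (hp0 : 0 < p) (hp1 : p ≤ 1)
    (φ : I → H) (ψ : J → H)
    (hφ : ∀ f : H, HasSum (fun i => ⟪f, φ i⟫_ℂ • φ i) f)
    (hψ : ∀ f : H, HasSum (fun j => ⟪f, ψ j⟫_ℂ • ψ j) f)
    (hrowSummable : ∀ i, Summable fun j => ‖⟪φ i, ψ j⟫_ℂ‖ ^ p)
    (hcolSummable : ∀ j, Summable fun i => ‖⟪φ i, ψ j⟫_ℂ‖ ^ p)
    (hrow : ∀ i, ∑' j, ‖⟪φ i, ψ j⟫_ℂ‖ ^ p ≤ B ^ p)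
    (hcol : ∀ j, ∑' i, ‖⟪φ i, ψ j⟫_ℂ‖ ^ p ≤ B ^ p) :
    ∀ f : H, (Summable fun i => ‖⟪f, φ i⟫_ℂ‖ ^ p) ↔ (Summable fun j => ‖⟪f, ψ j⟫_ℂ‖ ^ p) :=
  stmt4_general p B hp0 hp1 φ ψ hφ hψ hrowSummable hcolSummable hrow hcol
end

section
/- Fix j ≥ 0 and an integer k with |k| ≤ ⌈2^{j/2}⌉, and fix a real q > 1. Then ∑_{m ∈ ℤ²} (1 + |T(m)|²)^{-q} ≤ C_q · ∑_{m ∈ ℤ²} (1 + |m|²)^{-q}, where T(m) = (m₁, 2^{-j/2} k m₁ + m₂) and C_q is a constant independent of j and k. -/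
/-- Comparison of negative powers: if `v ≤ 9 u` with `u, v > 0`, then
`u ^ (-q) ≤ 9 ^ q * v ^ (-q)`. -/
lemma stmt8_rpow_key (q : ℝ) (hq : 0 < q) {u v : ℝ} (hu : 0 < u) (hv : 0 < v)
    (h : v ≤ 9 * u) : u ^ (-q) ≤ (9 : ℝ) ^ q * v ^ (-q) := by
  have h9 : (0:ℝ) < 9 := by norm_num
  have hdiv : v / 9 ≤ u := by linarith [(div_le_iff₀ h9).mpr (by linarith : v ≤ u * 9)]
  have h1 : u ^ (-q) ≤ (v / 9) ^ (-q) :=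
    Real.rpow_le_rpow_of_nonpos (div_pos hv h9) hdiv (neg_nonpos.mpr hq.le)
  calc u ^ (-q) ≤ (v / 9) ^ (-q) := h1
    _ = v ^ (-q) / (9:ℝ) ^ (-q) := Real.div_rpow hv.le h9.le (-q)
    _ = (9:ℝ) ^ q * v ^ (-q) := by
        rw [Real.rpow_neg h9.le]
        field_simp

/-- Geometry: with `|a| ≤ 2`, bases are comparable within factor 9. -/
lemma stmt8_geom {a x y : ℝ} (ha : |a| ≤ 2) :
    1 + x ^ 2 + y ^ 2 ≤ 9 * (1 + x ^ 2 + (a * x + y) ^ 2) ∧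
    1 + x ^ 2 + (a * x + y) ^ 2 ≤ 9 * (1 + x ^ 2 + y ^ 2) := by
  have ha2 : a ^ 2 ≤ 4 := by nlinarith [abs_nonneg a, sq_abs a]
  have hx : (4 - a ^ 2) * x ^ 2 ≥ 0 := mul_nonneg (by linarith) (sq_nonneg x)
  constructor
  · nlinarith [sq_nonneg (2 * a * x + y), sq_nonneg x]
  · nlinarith [sq_nonneg (a * x - y), sq_nonneg x]

/-- For the sheared lattice map `T m = (m₁, 2^{-j/2} k m₁ + m₂)` with `|k| ≤ ⌈2^{j/2}⌉`,
the lattice sum `∑_{m ∈ ℤ²} (1 + |T m|²)^{-q}` is bounded by `C_q` times the standard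
lattice sum, with `C_q` independent of `j` and `k`. -/
theorem stmt8 (q : ℝ) (hq : 1 < q) :
    ∃ C : ℝ, 0 < C ∧ ∀ (j : ℝ) (k : ℤ), 0 ≤ j → |k| ≤ ⌈(2 : ℝ) ^ (j / 2)⌉ →
      ∑' m : ℤ × ℤ,
          (1 + (m.1 : ℝ) ^ 2 + ((2 : ℝ) ^ (-(j / 2)) * k * m.1 + m.2) ^ 2) ^ (-q)
        ≤ C * ∑' m : ℤ × ℤ, (1 + (m.1 : ℝ) ^ 2 + (m.2 : ℝ) ^ 2) ^ (-q) := by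
  have hq0 : 0 < q := lt_trans one_pos hq
  refine ⟨(9:ℝ) ^ q, Real.rpow_pos_of_pos (by norm_num) q, ?_⟩
  intro j k hj hk
  set a : ℝ := (2 : ℝ) ^ (-(j / 2)) * k with ha_def
  -- |a| ≤ 2
  have hpow : (0:ℝ) < (2:ℝ) ^ (j / 2) := Real.rpow_pos_of_pos (by norm_num) _
  have hneg : (2:ℝ) ^ (-(j / 2)) = ((2:ℝ) ^ (j / 2))⁻¹ := Real.rpow_neg (by norm_num) _
  have hone : (1:ℝ) ≤ (2:ℝ) ^ (j / 2) :=
    Real.one_le_rpow (by norm_num) (by linarith)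
  have hinv : (2:ℝ) ^ (-(j / 2)) ≤ 1 := by
    rw [hneg]; exact inv_le_one_of_one_le₀ hone
  have hinvpos : (0:ℝ) < (2:ℝ) ^ (-(j / 2)) := Real.rpow_pos_of_pos (by norm_num) _
  have hkr : |(k:ℝ)| ≤ (2:ℝ) ^ (j / 2) + 1 := by
    have h1 : ((|k| : ℤ) : ℝ) ≤ (⌈(2 : ℝ) ^ (j / 2)⌉ : ℝ) := by exact_mod_cast hk
    have h2 : ((⌈(2 : ℝ) ^ (j / 2)⌉ : ℤ) : ℝ) < (2:ℝ) ^ (j / 2) + 1 :=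
      Int.ceil_lt_add_one _
    push_cast at h1
    linarith
  have ha : |a| ≤ 2 := by
    have : |a| = (2:ℝ) ^ (-(j / 2)) * |(k:ℝ)| := by
      rw [ha_def, abs_mul, abs_of_pos hinvpos]
    rw [this]
    have hmul : (2:ℝ) ^ (-(j / 2)) * |(k:ℝ)| ≤
        (2:ℝ) ^ (-(j / 2)) * ((2:ℝ) ^ (j / 2) + 1) :=
      mul_le_mul_of_nonneg_left hkr hinvpos.le
    have hprod : (2:ℝ) ^ (-(j / 2)) * (2:ℝ) ^ (j / 2) = 1 := by
      rw [hneg]; field_simp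
    calc (2:ℝ) ^ (-(j / 2)) * |(k:ℝ)| ≤ (2:ℝ) ^ (-(j / 2)) * ((2:ℝ) ^ (j / 2) + 1) := hmul
      _ = 1 + (2:ℝ) ^ (-(j / 2)) := by rw [mul_add, hprod]; ring
      _ ≤ 2 := by linarith
  -- the two term families
  set f : ℤ × ℤ → ℝ := fun m =>
    (1 + (m.1 : ℝ) ^ 2 + (a * m.1 + m.2) ^ 2) ^ (-q) with hf_def
  set g : ℤ × ℤ → ℝ := fun m => (1 + (m.1 : ℝ) ^ 2 + (m.2 : ℝ) ^ 2) ^ (-q) with hg_def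
  have hfbase : ∀ m : ℤ × ℤ, (0:ℝ) < 1 + (m.1 : ℝ) ^ 2 + (a * m.1 + m.2) ^ 2 :=
    fun m => by positivity
  have hgbase : ∀ m : ℤ × ℤ, (0:ℝ) < 1 + (m.1 : ℝ) ^ 2 + (m.2 : ℝ) ^ 2 :=
    fun m => by positivity
  have hfg : ∀ m : ℤ × ℤ, f m ≤ (9:ℝ) ^ q * g m := fun m =>
    stmt8_rpow_key q hq0 (hfbase m) (hgbase m) (stmt8_geom ha).1
  have hgf : ∀ m : ℤ × ℤ, g m ≤ (9:ℝ) ^ q * f m := fun m =>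
    stmt8_rpow_key q hq0 (hgbase m) (hfbase m) (stmt8_geom ha).2
  have hfnn : ∀ m : ℤ × ℤ, 0 ≤ f m := fun m => (Real.rpow_pos_of_pos (hfbase m) _).le
  have hgnn : ∀ m : ℤ × ℤ, 0 ≤ g m := fun m => (Real.rpow_pos_of_pos (hgbase m) _).le
  have hgoal : ∑' m, f m ≤ (9:ℝ) ^ q * ∑' m, g m := by
    by_cases hs : Summable g
    · have hsum9 : Summable (fun m => (9:ℝ) ^ q * g m) := hs.mul_left _
      have hsf : Summable f := Summable.of_nonneg_of_le hfnn hfg hsum9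
      calc ∑' m, f m ≤ ∑' m, (9:ℝ) ^ q * g m := Summable.tsum_le_tsum hfg hsf hsum9
        _ = (9:ℝ) ^ q * ∑' m, g m := tsum_mul_left
    · have hnf : ¬ Summable f := by
        intro hsf
        exact hs (Summable.of_nonneg_of_le hgnn hgf (hsf.mul_left _))
      rw [tsum_eq_zero_of_not_summable hnf, tsum_eq_zero_of_not_summable hs]
      simp
  convert hgoal using 2
end
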